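/- Let K = ℚ(ζ₈) be the 8th cyclotomic field with ring of integers ℤ_K, t = ζ₈, and let 𝔫 be the ideal of ℤ_K generated by 5t³ + 5t - 4. Then the congruence subgroup Γ₀(𝔫) ≤ GL₂(ℤ_K) contains no element of order 3; that is, every g ∈ Γ₀(𝔫) with g³ = 1 satisfies g = 1. -/

import Mathlib

open Matrix NumberField

/-- The congruence subgroup `Γ₀(I)` of `GL₂(R)`: invertible `2 × 2` matrices over `R`
whose lower-left entry lies in the ideal `I`. -/
def Gamma0 {R : Type*} [CommRing R] (I : Ideal R) : Subgroup (GL (Fin 2) R) where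
  carrier := { g | (g : Matrix (Fin 2) (Fin 2) R) 1 0 ∈ I }
  one_mem' := by
    simp [Matrix.one_apply_ne (show (1 : Fin 2) ≠ 0 by decide)]
  mul_mem' := by
    intro a b ha hb
    simp only [Set.mem_setOf_eq, Units.val_mul, Matrix.mul_apply, Fin.sum_univ_two] at *
    exact add_mem (I.mul_mem_right _ ha) (I.mul_mem_left _ hb)
  inv_mem' := by
    intro a ha
    simp only [Set.mem_setOf_eq] at *
    rw [Matrix.coe_units_inv, Matrix.inv_def, Matrix.adjugate_fin_two, Matrix.smul_apply]
    have h10 : (!![(a : Matrix (Fin 2) (Fin 2) R) 1 1, -(a : Matrix (Fin 2) (Fin 2) R) 0 1;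
        -(a : Matrix (Fin 2) (Fin 2) R) 1 0, (a : Matrix (Fin 2) (Fin 2) R) 0 0]) 1 0
        = -((a : Matrix (Fin 2) (Fin 2) R) 1 0) := by simp
    rw [h10, smul_eq_mul, mul_neg]
    exact I.neg_mem (I.mul_mem_left _ ha)

/-!
Reduce modulo the prime above `2`: since `Φ₈(1) = 2`, sending `t ↦ 1` defines a ring
homomorphism `ℤ_K → 𝔽₂`, which kills `5t³ + 5t - 4`; so every `g ∈ Γ₀(𝔫)` becomes upper
triangular over `𝔽₂`. By Cayley–Hamilton a `2 × 2` matrix satisfies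
`g³ = (τ² - δ) g - τδ`, where `τ`, `δ` are its trace and determinant. Over a domain, `g³ = 1`
then forces either `g = a` scalar with `a³ = 1`, or `δ = τ²` and `τδ = -1`. In the first case
`a ≠ 1` would be a root of `X² + X + 1`; in the second, the ratio of the diagonal entries of
the reduction of `g` is such a root. But `X² + X + 1` has no root in `𝔽₂`.
-/

theorem Gamma0_mono {R : Type*} [CommRing R] {I J : Ideal R} (h : I ≤ J) :
    Gamma0 I ≤ Gamma0 J :=
  fun _ hg => h hg

namespace Matrix

variable {R : Type*} [CommRing R]

theorem pow_three_fin_two (A : Matrix (Fin 2) (Fin 2) R) :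
    A ^ 3 = (A.trace ^ 2 - A.det) • A - (A.trace * A.det) • (1 : Matrix (Fin 2) (Fin 2) R) := by
  rw [eta_fin_two A]
  ext i j
  fin_cases i <;> fin_cases j <;> simp [pow_three, trace_fin_two, det_fin_two] <;> ring

theorem exists_eq_scalar_or_det_eq_trace_sq_of_pow_three_eq_one [IsDomain R]
    {A : Matrix (Fin 2) (Fin 2) R} (hA : A ^ 3 = 1) :
    (∃ a : R, a ^ 3 = 1 ∧ A = scalar (Fin 2) a) ∨
      (A.det = A.trace ^ 2 ∧ A.trace * A.det = -1) := by
  set u := A.trace ^ 2 - A.det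
  have hu : ∀ i j, u * A i j = (1 + A.trace * A.det) * (1 : Matrix (Fin 2) (Fin 2) R) i j := by
    intro i j
    have := congrFun (congrFun (pow_three_fin_two A) i) j
    rw [hA] at this
    simp only [sub_apply, smul_apply, smul_eq_mul] at this
    linear_combination -this
  rcases eq_or_ne u 0 with hu0 | hu0
  · right
    have h00 := hu 0 0
    simp only [hu0, zero_mul, one_apply_eq, mul_one] at h00
    exact ⟨by linear_combination -hu0, by linear_combination -h00⟩
  · left
    have hoff : ∀ i j, i ≠ j → A i j = 0 := fun i j hij => by
      simpa [hu0, one_apply_ne hij] using hu i j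
    have hdiag : A 1 1 = A 0 0 := mul_left_cancel₀ hu0 (by simp [hu])
    have hscalar : A = scalar (Fin 2) (A 0 0) := by
      ext i j
      fin_cases i <;> fin_cases j <;> simp [hoff, hdiag]
    refine ⟨A 0 0, ?_, hscalar⟩
    rw [hscalar, ← map_pow] at hA
    simpa using congrFun (congrFun hA 0) 0

end Matrix

open Matrix in
theorem eq_one_of_pow_three_eq_one_of_mem_Gamma0_ker {R S : Type*} [CommRing R] [IsDomain R]
    [CommRing S] (hS : ∀ x : S, x ^ 2 + x + 1 ≠ 0) (φ : R →+* S) {g : GL (Fin 2) R}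
    (hg : g ∈ Gamma0 (RingHom.ker φ)) (hg3 : g ^ 3 = 1) : g = 1 := by
  have hA : (g : Matrix (Fin 2) (Fin 2) R) ^ 3 = 1 := by
    rw [← Units.val_pow_eq_pow_val, hg3, Units.val_one]
  rcases exists_eq_scalar_or_det_eq_trace_sq_of_pow_three_eq_one hA with ⟨a, ha3, ha⟩ | ⟨hdet, htr⟩
  · have ha1 : a = 1 := by
      have hfac : (a - 1) * (a ^ 2 + a + 1) = 0 := by linear_combination ha3
      refine sub_eq_zero.mp ((mul_eq_zero.mp hfac).resolve_right fun h => hS (φ a) ?_)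
      simpa using congrArg φ h
    ext : 1
    simp [ha, ha1]
  · exfalso
    have hc : φ ((g : Matrix (Fin 2) (Fin 2) R) 1 0) = 0 := hg
    rw [det_fin_two, trace_fin_two] at hdet htr
    set p := φ ((g : Matrix (Fin 2) (Fin 2) R) 0 0)
    set q := φ ((g : Matrix (Fin 2) (Fin 2) R) 1 1)
    have hdet' := congrArg φ hdet
    have htr' := congrArg φ htr
    simp only [map_sub, map_mul, map_add, map_pow, map_neg, map_one, hc, mul_zero,
      sub_zero] at hdet' htr'
    -- `v` inverts `q`, and `p * v = p / q` is a root of `X ^ 2 + X + 1`.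
    set v := -((p + q) * p)
    have hqv : q * v = 1 := by linear_combination -htr'
    have hpq : p ^ 2 + p * q + q ^ 2 = 0 := by linear_combination -hdet'
    exact hS (p * v) (by linear_combination v ^ 2 * hpq - (p * v + 1 + q * v) * hqv)

open Polynomial in
theorem IsPrimitiveRoot.exists_ringHom_ringOfIntegers_apply_eq {n : ℕ} [NeZero n] {K : Type*}
    [Field K] [CharZero K] [IsCyclotomicExtension {n} ℚ K] {ζ : 𝓞 K} (hζ : IsPrimitiveRoot ζ n)
    {S : Type*} [CommRing S] {x : S} (hx : (cyclotomic n S).IsRoot x) :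
    ∃ φ : 𝓞 K →+* S, φ ζ = x := by
  have hζK : IsPrimitiveRoot (ζ : K) n := hζ.map_of_injective RingOfIntegers.coe_injective
  let pb := hζK.integralPowerBasis
  have hgen : pb.gen = ζ := by simp [pb]
  have hmin : minpoly ℤ pb.gen = cyclotomic n ℤ := by
    rw [hgen, ← minpoly.algebraMap_eq RingOfIntegers.coe_injective,
      ← cyclotomic_eq_minpoly hζK (NeZero.pos n)]
  have hroot : aeval x (minpoly ℤ pb.gen) = 0 := by
    rwa [hmin, aeval_def, ← eval_map, map_cyclotomic]
  exact ⟨pb.lift x hroot, hgen ▸ pb.lift_gen x hroot⟩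

/-- In `K = ℚ(ζ_8)` with ring of integers `ℤ_K`, `t = ζ_8` and `𝔫 = (5 * t ^ 3 + 5 * t - 4)`,
the congruence subgroup `Γ₀(𝔫) ≤ GL₂(ℤ_K)` contains no element of order `3`:
every `g ∈ Γ₀(𝔫)` with `g³ = 1` satisfies `g = 1`. -/
theorem no_order_three (t : 𝓞 (CyclotomicField 8 ℚ)) (ht : IsPrimitiveRoot t 8) :
    ∀ g ∈ Gamma0 (Ideal.span {(5 * t ^ 3 + 5 * t - 4 : 𝓞 (CyclotomicField 8 ℚ))}),
      g ^ 3 = 1 → g = 1 := by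
  have hroot : (Polynomial.cyclotomic 8 (ZMod 2)).IsRoot 1 := by
    rw [Polynomial.IsRoot.def, show 8 = 2 ^ (2 + 1) by norm_num,
      Polynomial.eval_one_cyclotomic_prime_pow]
    rfl
  have : IsCyclotomicExtension {8} ℚ (CyclotomicField 8 ℚ) :=
    CyclotomicField.isCyclotomicExtension 8 ℚ
  obtain ⟨φ, hφ⟩ := ht.exists_ringHom_ringOfIntegers_apply_eq hroot
  have hspan : Ideal.span {5 * t ^ 3 + 5 * t - 4} ≤ RingHom.ker φ := by
    rw [Ideal.span_le, Set.singleton_subset_iff, SetLike.mem_coe, RingHom.mem_ker]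
    simp only [map_sub, map_add, map_mul, map_pow, map_ofNat, hφ]
    decide
  intro g hg hg3
  exact eq_one_of_pow_three_eq_one_of_mem_Gamma0_ker (by decide) φ (Gamma0_mono hspan hg) hg3
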